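/- arXiv:1609.06677 — 3 statements merged into one kernel-verified Lean document; each statement's English description precedes it below -/
import Mathlib

section
/- On ℝ³, let P be a bi-vector with components P¹², P¹³, P²³ and let the one-form associated to it be P̂ = −P²³dx + P¹³dy − P¹²dz. Then the Jacobi identity for P (i.e. the vanishing of all components of the Schouten bracket [[P,P]]) holds if and only if dP̂ ∧ P̂ = 0. -/
noncomputable def pd {n : ℕ} (i : Fin n) (f : (Fin n → ℝ) → ℝ) : (Fin n → ℝ) → ℝ :=
  fun x => fderiv ℝ f x (Pi.single i 1)

/-- The coefficient of dx∧dy∧dz in dP ∧ P, for a one-form P on ℝ³. -/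
noncomputable def dPwedgeP (P : Fin 3 → (Fin 3 → ℝ) → ℝ) : (Fin 3 → ℝ) → ℝ :=
  fun x => (pd 0 (P 1) x - pd 1 (P 0) x) * P 2 x
         + (pd 1 (P 2) x - pd 2 (P 1) x) * P 0 x
         + (pd 2 (P 0) x - pd 0 (P 2) x) * P 1 x

/-- Skew matrix of a bi-vector on ℝ³ from its components P¹², P¹³, P²³. -/
noncomputable def biv3 (p12 p13 p23 : (Fin 3 → ℝ) → ℝ) :
    Fin 3 → Fin 3 → (Fin 3 → ℝ) → ℝ :=
  ![![fun _ => 0, p12, p13],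
    ![fun y => -p12 y, fun _ => 0, p23],
    ![fun y => -p13 y, fun y => -p23 y, fun _ => 0]]

lemma pd_neg {n : ℕ} (i : Fin n) (f : (Fin n → ℝ) → ℝ) (x : Fin n → ℝ) :
    pd i (fun y => -f y) x = -(pd i f x) := by
  simp [pd, fderiv_neg]

lemma pd_zero {n : ℕ} (i : Fin n) (x : Fin n → ℝ) :
    pd i (fun _ : Fin n → ℝ => (0:ℝ)) x = 0 := by
  simp [pd]

theorem stmt3 (p12 p13 p23 : (Fin 3 → ℝ) → ℝ)
    (h12 : ContDiff ℝ (⊤ : ℕ∞) p12) (h13 : ContDiff ℝ (⊤ : ℕ∞) p13) (h23 : ContDiff ℝ (⊤ : ℕ∞) p23) :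
    (∀ i j k : Fin 3, ∀ x, ∑ l : Fin 3,
        (pd l (biv3 p12 p13 p23 i j) x * biv3 p12 p13 p23 l k x
       + pd l (biv3 p12 p13 p23 j k) x * biv3 p12 p13 p23 l i x
       + pd l (biv3 p12 p13 p23 k i) x * biv3 p12 p13 p23 l j x) = 0)
    ↔ (∀ x, dPwedgeP ![fun y => -p23 y, p13, fun y => -p12 y] x = 0) := by
  constructor
  · intro h x
    have H := h 0 1 2 x
    simp only [biv3, Fin.sum_univ_three, Matrix.cons_val_zero, Matrix.cons_val_one,
      Matrix.head_cons, Matrix.cons_val_two, Matrix.tail_cons, pd_neg, pd_zero,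
      dPwedgeP] at H ⊢
    linarith
  · intro h i j k x
    have H := h x
    simp only [dPwedgeP, Matrix.cons_val_zero, Matrix.cons_val_one, Matrix.head_cons,
      Matrix.cons_val_two, Matrix.tail_cons, pd_neg] at H
    have key : ∀ m : Fin 3, m = 0 ∨ m = 1 ∨ m = 2 := by decide
    rcases key i with rfl | rfl | rfl <;> rcases key j with rfl | rfl | rfl <;>
      rcases key k with rfl | rfl | rfl <;>
      simp only [biv3, Fin.sum_univ_three, Matrix.cons_val_zero, Matrix.cons_val_one,
        Matrix.head_cons, Matrix.cons_val_two, Matrix.tail_cons, pd_neg, pd_zero,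
        Fin.isValue] <;>
      ring_nf <;> linarith
end

section
/- On ℝ³ with coordinates (x,y,z), if P is a Poisson bi-vector (its components satisfy the Jacobi identity) and f is any smooth function, then the rescaled bi-vector fP is also Poisson. -/
lemma pd_mul {n : ℕ} (l : Fin n) (f g : (Fin n → ℝ) → ℝ)
    (hf : ContDiff ℝ (⊤ : ℕ∞) f) (hg : ContDiff ℝ (⊤ : ℕ∞) g) (x : Fin n → ℝ) :
    pd l (fun y => f y * g y) x = pd l f x * g x + f x * pd l g x := by
  unfold pd
  rw [fderiv_fun_mul (hf.differentiable (by simp) x) (hg.differentiable (by simp) x)]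
  simp
  ring

lemma skew_trivial (P : Fin 3 → Fin 3 → (Fin 3 → ℝ) → ℝ)
    (hskew : ∀ i j x, P i j x = - P j i x) (i j k l : Fin 3) (x : Fin 3 → ℝ) :
    P i j x * P l k x + P j k x * P l i x + P k i x * P l j x = 0 := by
  have h00 : P 0 0 x = 0 := by have := hskew 0 0 x; linarith
  have h11 : P 1 1 x = 0 := by have := hskew 1 1 x; linarith
  have h22 : P 2 2 x = 0 := by have := hskew 2 2 x; linarith
  have h10 : P 1 0 x = -P 0 1 x := hskew 1 0 x
  have h20 : P 2 0 x = -P 0 2 x := hskew 2 0 x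
  have h21 : P 2 1 x = -P 1 2 x := hskew 2 1 x
  fin_cases i <;> fin_cases j <;> fin_cases k <;> fin_cases l <;>
    simp [h00, h11, h22, h10, h20, h21] <;> ring

/-- On ℝ³, rescaling a Poisson bi-vector by a smooth function gives a Poisson bi-vector. -/
theorem stmt4 (P : Fin 3 → Fin 3 → (Fin 3 → ℝ) → ℝ)
    (hsmooth : ∀ i j, ContDiff ℝ (⊤ : ℕ∞) (P i j))
    (hskew : ∀ i j x, P i j x = - P j i x)
    (hJac : ∀ i j k : Fin 3, ∀ x, ∑ l : Fin 3,
        (pd l (P i j) x * P l k x + pd l (P j k) x * P l i x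
       + pd l (P k i) x * P l j x) = 0)
    (f : (Fin 3 → ℝ) → ℝ) (hf : ContDiff ℝ (⊤ : ℕ∞) f) :
    ∀ i j k : Fin 3, ∀ x, ∑ l : Fin 3,
        (pd l (fun y => f y * P i j y) x * (f x * P l k x)
       + pd l (fun y => f y * P j k y) x * (f x * P l i x)
       + pd l (fun y => f y * P k i y) x * (f x * P l j x)) = 0 := by
  intro i j k x
  have hstep : ∀ l : Fin 3,
      (pd l (fun y => f y * P i j y) x * (f x * P l k x)
       + pd l (fun y => f y * P j k y) x * (f x * P l i x)
       + pd l (fun y => f y * P k i y) x * (f x * P l j x))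
      = f x * f x * (pd l (P i j) x * P l k x + pd l (P j k) x * P l i x
       + pd l (P k i) x * P l j x) := by
    intro l
    rw [pd_mul l f (P i j) hf (hsmooth i j), pd_mul l f (P j k) hf (hsmooth j k),
        pd_mul l f (P k i) hf (hsmooth k i)]
    linear_combination (f x * pd l f x) * skew_trivial P hskew i j k l x
  rw [Finset.sum_congr rfl (fun l _ => hstep l), ← Finset.mul_sum, hJac i j k x, mul_zero]
end

section
/- For the Poisson bi-vector P₀ on ℝ⁴ with components P₀¹² = −2x₁x₂³x₃⁵x₄, P₀¹³ = −3x₁x₂²x₃⁶x₄, P₀¹⁴ = 12x₁x₂²x₃⁵x₄², P₀²³ = −x₂³x₃⁶x₄, P₀²⁴ = 2x₂³x₃⁵x₄², P₀³⁴ = −3x₂²x₃⁶x₄², the antisymmetrized second tetrahedral flow Γ₂(P₀) is not identically zero; in particular its (1,2)-component equals −7380·x₁x₂⁹x₃²⁰x₄⁴ ≠ 0. This disproves the claim that Γ₂ vanishes at every Poisson bi-vector. -/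
/-- The explicit Poisson bi-vector P₀ on ℝ⁴ from the determinant construction
with g₁ = x₂³x₃²x₄, g₂ = x₁x₃⁴x₄. -/
noncomputable def P0 : Fin 4 → Fin 4 → (Fin 4 → ℝ) → ℝ :=
  ![![fun _ => 0,
      fun x => -2 * x 0 * (x 1)^3 * (x 2)^5 * x 3,
      fun x => -3 * x 0 * (x 1)^2 * (x 2)^6 * x 3,
      fun x => 12 * x 0 * (x 1)^2 * (x 2)^5 * (x 3)^2],
    ![fun x => 2 * x 0 * (x 1)^3 * (x 2)^5 * x 3,
      fun _ => 0,
      fun x => -(x 1)^3 * (x 2)^6 * x 3,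
      fun x => 2 * (x 1)^3 * (x 2)^5 * (x 3)^2],
    ![fun x => 3 * x 0 * (x 1)^2 * (x 2)^6 * x 3,
      fun x => (x 1)^3 * (x 2)^6 * x 3,
      fun _ => 0,
      fun x => -3 * (x 1)^2 * (x 2)^6 * (x 3)^2],
    ![fun x => -12 * x 0 * (x 1)^2 * (x 2)^5 * (x 3)^2,
      fun x => -2 * (x 1)^3 * (x 2)^5 * (x 3)^2,
      fun x => 3 * (x 1)^2 * (x 2)^6 * (x 3)^2,
      fun _ => 0]]

/-- The first Kontsevich tetrahedral flow Γ₁. -/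
noncomputable def Gamma1 {n : ℕ} (P : Fin n → Fin n → (Fin n → ℝ) → ℝ)
    (i j : Fin n) : (Fin n → ℝ) → ℝ :=
  fun x => ∑ k, ∑ l, ∑ m, ∑ k', ∑ l', ∑ m',
    pd k (pd l (pd m (P i j))) x * pd l' (P k k') x * pd m' (P l l') x * pd k' (P m m') x

/-- The second tetrahedral flow before antisymmetrization. -/
noncomputable def T2 {n : ℕ} (P : Fin n → Fin n → (Fin n → ℝ) → ℝ)
    (i m : Fin n) : (Fin n → ℝ) → ℝ :=
  fun x => ∑ j, ∑ k, ∑ l, ∑ k', ∑ l', ∑ m',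
    pd k (pd l (P i j)) x * pd k' (pd l' (P k m)) x * pd m' (P k' l) x * pd j (P m' l') x

/-- The antisymmetrized second Kontsevich tetrahedral flow Γ₂. -/
noncomputable def Gamma2 {n : ℕ} (P : Fin n → Fin n → (Fin n → ℝ) → ℝ)
    (i m : Fin n) : (Fin n → ℝ) → ℝ :=
  fun x => (T2 P i m x - T2 P m i x) / 2

/-- The (i,j,k)-component of the Schouten bracket of two bi-vectors. -/
noncomputable def schouten {n : ℕ} (A B : Fin n → Fin n → (Fin n → ℝ) → ℝ)
    (i j k : Fin n) : (Fin n → ℝ) → ℝ :=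
  fun x => ∑ l,
      (pd l (A i j) x * B l k x + pd l (B i j) x * A l k x
     + pd l (A j k) x * B l i x + pd l (B j k) x * A l i x
     + pd l (A k i) x * B l j x + pd l (B k i) x * A l j x)

noncomputable def mon (c : ℝ) (a b d e : ℕ) : (Fin 4 → ℝ) → ℝ :=
  fun x => c * (x 0)^a * (x 1)^b * (x 2)^d * (x 3)^e

lemma hasFDerivAt_proj (i : Fin 4) (x : Fin 4 → ℝ) :
    HasFDerivAt (fun y : Fin 4 → ℝ => y i) (ContinuousLinearMap.proj (R := ℝ) i) x :=
  (ContinuousLinearMap.proj (R := ℝ) (φ := fun _ : Fin 4 => ℝ) i).hasFDerivAt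

lemma hasFDerivAt_projpow (i : Fin 4) (n : ℕ) (x : Fin 4 → ℝ) :
    HasFDerivAt (fun y : Fin 4 → ℝ => (y i)^n)
      (((n : ℝ) * (x i)^(n-1)) • ContinuousLinearMap.proj (R := ℝ) i) x :=
  (hasDerivAt_pow n (x i)).comp_hasFDerivAt x (hasFDerivAt_proj i x)

lemma hasFDerivAt_mon (c : ℝ) (a b d e : ℕ) (x : Fin 4 → ℝ) :
    HasFDerivAt (mon c a b d e)
      ((((c * x 0 ^ a * x 1 ^ b * x 2 ^ d) • ((e:ℝ) * x 3 ^ (e - 1)) • ContinuousLinearMap.proj (R := ℝ) 3 +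
      x 3 ^ e •
        ((c * x 0 ^ a * x 1 ^ b) • ((d:ℝ) * x 2 ^ (d - 1)) • ContinuousLinearMap.proj (R := ℝ) 2 +
          x 2 ^ d •
            ((c * x 0 ^ a) • ((b:ℝ) * x 1 ^ (b - 1)) • ContinuousLinearMap.proj (R := ℝ) 1 +
              x 1 ^ b • c • ((a:ℝ) * x 0 ^ (a - 1)) • ContinuousLinearMap.proj (R := ℝ) 0))) : (Fin 4 → ℝ) →L[ℝ] ℝ)) x :=
  ((((hasFDerivAt_projpow 0 a x).const_mul c).mul (hasFDerivAt_projpow 1 b x)).mul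
      (hasFDerivAt_projpow 2 d x)).mul (hasFDerivAt_projpow 3 e x)

lemma pd0_mon (c : ℝ) (a b d e : ℕ) :
    pd 0 (mon c a b d e) = mon (c * a) (a - 1) b d e := by
  funext x
  show fderiv ℝ (mon c a b d e) x (Pi.single 0 1) = _
  rw [(hasFDerivAt_mon c a b d e x).fderiv]
  simp [Pi.single_apply, mon]
  ring

lemma pd1_mon (c : ℝ) (a b d e : ℕ) :
    pd 1 (mon c a b d e) = mon (c * b) a (b - 1) d e := by
  funext x
  show fderiv ℝ (mon c a b d e) x (Pi.single 1 1) = _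
  rw [(hasFDerivAt_mon c a b d e x).fderiv]
  simp [Pi.single_apply, mon]
  ring

lemma pd2_mon (c : ℝ) (a b d e : ℕ) :
    pd 2 (mon c a b d e) = mon (c * d) a b (d - 1) e := by
  funext x
  show fderiv ℝ (mon c a b d e) x (Pi.single 2 1) = _
  rw [(hasFDerivAt_mon c a b d e x).fderiv]
  simp [Pi.single_apply, mon]
  ring

lemma pd3_mon (c : ℝ) (a b d e : ℕ) :
    pd 3 (mon c a b d e) = mon (c * e) a b d (e - 1) := by
  funext x
  show fderiv ℝ (mon c a b d e) x (Pi.single 3 1) = _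
  rw [(hasFDerivAt_mon c a b d e x).fderiv]
  simp [Pi.single_apply, mon]
  ring

lemma P0_00 : P0 0 0 = mon (0) 0 0 0 0 := by
  funext x; simp [P0, mon]; try ring

lemma P0_01 : P0 0 1 = mon (-2) 1 3 5 1 := by
  funext x; simp [P0, mon]; try ring

lemma P0_02 : P0 0 2 = mon (-3) 1 2 6 1 := by
  funext x; simp [P0, mon]; try ring

lemma P0_03 : P0 0 3 = mon (12) 1 2 5 2 := by
  funext x; simp [P0, mon]; try ring

lemma P0_10 : P0 1 0 = mon (2) 1 3 5 1 := by
  funext x; simp [P0, mon]; try ring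

lemma P0_11 : P0 1 1 = mon (0) 0 0 0 0 := by
  funext x; simp [P0, mon]; try ring

lemma P0_12 : P0 1 2 = mon (-1) 0 3 6 1 := by
  funext x; simp [P0, mon]; try ring

lemma P0_13 : P0 1 3 = mon (2) 0 3 5 2 := by
  funext x; simp [P0, mon]; try ring

lemma P0_20 : P0 2 0 = mon (3) 1 2 6 1 := by
  funext x; simp [P0, mon]; try ring

lemma P0_21 : P0 2 1 = mon (1) 0 3 6 1 := by
  funext x; simp [P0, mon]; try ring

lemma P0_22 : P0 2 2 = mon (0) 0 0 0 0 := by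
  funext x; simp [P0, mon]; try ring

lemma P0_23 : P0 2 3 = mon (-3) 0 2 6 2 := by
  funext x; simp [P0, mon]; try ring

lemma P0_30 : P0 3 0 = mon (-12) 1 2 5 2 := by
  funext x; simp [P0, mon]; try ring

lemma P0_31 : P0 3 1 = mon (-2) 0 3 5 2 := by
  funext x; simp [P0, mon]; try ring

lemma P0_32 : P0 3 2 = mon (3) 0 2 6 2 := by
  funext x; simp [P0, mon]; try ring

lemma P0_33 : P0 3 3 = mon (0) 0 0 0 0 := by
  funext x; simp [P0, mon]; try ring

set_option maxHeartbeats 4000000 in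
lemma T2a (x : Fin 4 → ℝ) : T2 P0 0 1 x = -12060 * x 0 * (x 1)^9 * (x 2)^20 * (x 3)^4 := by
  simp only [T2, Fin.sum_univ_four, P0_00, P0_01, P0_02, P0_03, P0_10, P0_11, P0_12, P0_13, P0_20, P0_21, P0_22, P0_23, P0_30, P0_31, P0_32, P0_33, pd0_mon, pd1_mon, pd2_mon, pd3_mon]
  norm_num [mon]
  ring

set_option maxHeartbeats 4000000 in
lemma T2b (x : Fin 4 → ℝ) : T2 P0 1 0 x = 2700 * x 0 * (x 1)^9 * (x 2)^20 * (x 3)^4 := by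
  simp only [T2, Fin.sum_univ_four, P0_00, P0_01, P0_02, P0_03, P0_10, P0_11, P0_12, P0_13, P0_20, P0_21, P0_22, P0_23, P0_30, P0_31, P0_32, P0_33, pd0_mon, pd1_mon, pd2_mon, pd3_mon]
  norm_num [mon]
  ring

/-- Γ₂(P₀) is not identically zero: its (1,2)-component equals −7380·x₁x₂⁹x₃²⁰x₄⁴ ≠ 0,
disproving the claim that Γ₂ vanishes at every Poisson bi-vector. -/
theorem stmt9 :
    (∀ x : Fin 4 → ℝ, Gamma2 P0 0 1 x = -7380 * x 0 * (x 1)^9 * (x 2)^20 * (x 3)^4) ∧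
    ¬ (∀ (i m : Fin 4) (x : Fin 4 → ℝ), Gamma2 P0 i m x = 0) := by
  have key : ∀ x : Fin 4 → ℝ,
      Gamma2 P0 0 1 x = -7380 * x 0 * (x 1)^9 * (x 2)^20 * (x 3)^4 := by
    intro x
    show (T2 P0 0 1 x - T2 P0 1 0 x) / 2 = _
    rw [T2a, T2b]; ring
  refine ⟨key, fun h => ?_⟩
  have h1 := h 0 1 (fun _ => 1)
  rw [key] at h1
  norm_num at h1
end
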